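/- Let f₀ : (0, R] → ℝ be continuous, nonnegative, with x ↦ f₀(|x|) subharmonic on the punctured ball {0 < |x| < ∞} of ℝ² (after extending by the harmonic profile), f₀(R) = 1, and f₀(r) = ln(r/a)/ln(R/a) for r ≥ R₀ where 0 < a < R₀ < R. Then f₀(r) ≥ ln(r/a)/ln(R/a) for all r ∈ (0, R] (interpreting the right side as its possibly negative value for r < a). -/

import Mathlib

/-!
Subtracting a radial harmonic function `α + β log ‖x‖` preserves the sub-mean value property,
and a radial function with that property on an annulus obeys the maximum principle. For
`s < R₀`, compare `f₀` on `s ≤ ‖x‖ ≤ R` with `h + c (log R - log ‖x‖)`, where `h` is the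
harmonic profile and `c` is chosen so that both agree at `s`; they also agree at `R`, so
`f₀ ≤ h + c (log R - log ‖x‖)`, and evaluating at `R₀`, where `f₀ = h`, gives `c ≥ 0`,
that is `h s ≤ f₀ s`.
-/

open Real Set Metric

lemma norm_mem_Icc_of_mem_sphere {E : Type*} [SeminormedAddCommGroup E] {c z : E} {ρ : ℝ}
    (hz : z ∈ sphere c ρ) : ‖z‖ ∈ Icc (‖c‖ - ρ) (‖c‖ + ρ) := by
  rw [mem_sphere, dist_eq_norm] at hz
  constructor <;> linarith [norm_sub_norm_le z c, norm_sub_norm_le c z, norm_sub_rev z c]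

lemma circleIntegrable_comp_norm {g : ℝ → ℝ} {c : ℂ} {ρ : ℝ}
    (hg : ContinuousOn g (Icc (‖c‖ - |ρ|) (‖c‖ + |ρ|))) :
    CircleIntegrable (fun z => g ‖z‖) c ρ :=
  (hg.comp continuous_norm.continuousOn fun _ hz =>
    norm_mem_Icc_of_mem_sphere hz).circleIntegrable'

lemma circleAverage_const_add_mul_log_norm (α β : ℝ) {c : ℂ} {ρ : ℝ} (hρ : |ρ| < ‖c‖) :
    circleAverage (fun z => α + β * log ‖z‖) c ρ = α + β * log ‖c‖ := by
  refine InnerProductSpace.HarmonicOnNhd.circleAverage_eq fun z hz => ?_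
  have hz0 : z ≠ 0 := by
    rintro rfl
    rw [mem_closedBall, dist_zero_left] at hz
    linarith
  exact (InnerProductSpace.harmonicAt_const α).add
    ((analyticAt_id.harmonicAt_log_norm hz0).const_smul (c := β))

lemma circleAverage_comp_norm_lt {g : ℝ → ℝ} {r ρ M : ℝ} (hρ : 0 < ρ) (hρr : ρ ≤ r)
    (hg : ContinuousOn g (Icc (r - ρ) (r + ρ))) (hle : ∀ t ∈ Icc (r - ρ) (r + ρ), g t ≤ M)
    (hlt : g (r - ρ) < M) : circleAverage (fun z => g ‖z‖) r ρ < M := by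
  have hnorm (θ : ℝ) : ‖circleMap r ρ θ‖ ∈ Icc (r - ρ) (r + ρ) := by
    simpa [abs_of_pos hρ, abs_of_pos (hρ.trans_le hρr)] using
      norm_mem_Icc_of_mem_sphere (circleMap_mem_sphere' (r : ℂ) ρ θ)
  have hπ : ‖circleMap r ρ π‖ = r - ρ := by
    rw [circleMap, Complex.exp_pi_mul_I, mul_neg_one, ← sub_eq_add_neg, ← Complex.ofReal_sub,
      Complex.norm_real, norm_of_nonneg (sub_nonneg.2 hρr)]
  have hint : ∫ θ in 0..2 * π, g ‖circleMap r ρ θ‖ < ∫ _ in 0..2 * π, M :=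
    intervalIntegral.integral_lt_integral_of_continuousOn_of_le_of_exists_lt (by positivity)
      (hg.comp_continuous (continuous_norm.comp (continuous_circleMap _ _)) hnorm).continuousOn
      continuousOn_const (fun θ _ => hle _ (hnorm θ))
      ⟨π, ⟨pi_pos.le, by linarith [pi_pos]⟩, hπ ▸ hlt⟩
  rw [intervalIntegral.integral_const, smul_eq_mul, sub_zero] at hint
  calc circleAverage (fun z => g ‖z‖) r ρ < (2 * π)⁻¹ * (2 * π * M) := by
        rw [circleAverage_def, smul_eq_mul]; gcongr
    _ = M := by field_simp

lemma continuousOn_const_add_mul_log (α β : ℝ) {S : Set ℝ} (hS : ∀ t ∈ S, t ≠ 0) :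
    ContinuousOn (fun t => α + β * log t) S :=
  continuousOn_const.add (continuousOn_const.mul (continuousOn_log.mono hS))

/-- Subharmonicity of `z ↦ g ‖z‖` on the annulus `s < ‖z‖ < R`, as a sub-mean value property;
by rotation invariance only circles centred on the positive real axis need to be tested. -/
def RadialSubmeanOn (g : ℝ → ℝ) (s R : ℝ) : Prop :=
  ∀ r ∈ Ioo s R, ∀ ρ, 0 < ρ → ρ < r - s → ρ < R - r →
    g r ≤ circleAverage (fun z => g ‖z‖) r ρ

/-- Radial harmonic functions in the plane. -/
def IsLogAffineOn (φ : ℝ → ℝ) (S : Set ℝ) : Prop :=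
  ∃ α β : ℝ, ∀ t ∈ S, φ t = α + β * log t

namespace RadialSubmeanOn

variable {g : ℝ → ℝ} {s R : ℝ}

theorem le_max (hsub : RadialSubmeanOn g s R) (hs : 0 ≤ s) (hg : ContinuousOn g (Icc s R))
    {t : ℝ} (ht : t ∈ Icc s R) : g t ≤ max (g s) (g R) := by
  obtain ⟨m, hm, hmax⟩ := isCompact_Icc.exists_isMaxOn ⟨t, ht⟩ hg
  by_contra! hgt
  have hM : max (g s) (g R) < g m := hgt.trans_le (hmax ht)
  -- The leftmost maximiser `r` is interior, and the circle about `r` through `r - ρ`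
  -- meets a value strictly below the maximum.
  set T := Icc s R ∩ g ⁻¹' {g m}
  have hTbdd : BddBelow T := ⟨s, fun x hx => hx.1.1⟩
  obtain ⟨⟨hsr, hrR⟩, hgr⟩ : sInf T ∈ T :=
    (hg.preimage_isClosed_of_isClosed isClosed_Icc isClosed_singleton).csInf_mem
      ⟨m, hm, rfl⟩ hTbdd
  set r := sInf T
  rw [mem_preimage, mem_singleton_iff] at hgr
  have hsr : s < r := hsr.lt_of_ne fun h => by
    rw [← h] at hgr; linarith [le_max_left (g s) (g R)]
  have hrR : r < R := hrR.lt_of_ne fun h => by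
    rw [h] at hgr; linarith [le_max_right (g s) (g R)]
  set ρ := min (r - s) (R - r) / 2 with hρdef
  have hρ : 0 < ρ := half_pos (lt_min (sub_pos.2 hsr) (sub_pos.2 hrR))
  have hρs : ρ < r - s := by linarith [min_le_left (r - s) (R - r), hρdef]
  have hρR : ρ < R - r := by linarith [min_le_right (r - s) (R - r), hρdef]
  have hdisc : Icc (r - ρ) (r + ρ) ⊆ Icc s R := Icc_subset_Icc (by linarith) (by linarith)
  have hlt : g (r - ρ) < g m := by
    refine (hmax (hdisc ⟨le_rfl, by linarith⟩)).lt_of_ne fun h => ?_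
    linarith [csInf_le hTbdd ⟨hdisc ⟨le_rfl, by linarith⟩, h⟩]
  have := circleAverage_comp_norm_lt hρ (by linarith) (hg.mono hdisc)
    (fun t ht => hmax (hdisc ht)) hlt
  linarith [hsub r ⟨hsr, hrR⟩ ρ hρ hρs hρR]

theorem sub_const_add_mul_log (hsub : RadialSubmeanOn g s R) (hs : 0 < s)
    (hg : ContinuousOn g (Icc s R)) (α β : ℝ) :
    RadialSubmeanOn (fun t => g t - (α + β * log t)) s R := by
  intro r hr ρ hρ hρs hρR
  have hnorm : ‖(r : ℂ)‖ = r := by simp [abs_of_pos (hs.trans hr.1)]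
  have hdisc : Icc (‖(r : ℂ)‖ - |ρ|) (‖(r : ℂ)‖ + |ρ|) ⊆ Icc s R := by
    rw [hnorm, abs_of_pos hρ]; exact Icc_subset_Icc (by linarith) (by linarith)
  have hlog : ContinuousOn (fun t => α + β * log t) (Icc s R) :=
    continuousOn_const_add_mul_log α β fun t ht => (hs.trans_le ht.1).ne'
  rw [circleAverage_fun_sub (circleIntegrable_comp_norm (hg.mono hdisc))
    (circleIntegrable_comp_norm (hlog.mono hdisc)),
    circleAverage_const_add_mul_log_norm α β (by rw [hnorm, abs_of_pos hρ]; linarith), hnorm]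
  exact sub_le_sub_right (hsub r hr ρ hρ hρs hρR) _

theorem le_of_isLogAffineOn (hsub : RadialSubmeanOn g s R) (hs : 0 < s)
    (hg : ContinuousOn g (Icc s R)) {φ : ℝ → ℝ} (hφ : IsLogAffineOn φ (Icc s R))
    (hgs : g s ≤ φ s) (hgR : g R ≤ φ R) {t : ℝ} (ht : t ∈ Icc s R) : g t ≤ φ t := by
  obtain ⟨α, β, hφ⟩ := hφ
  have hsR : s ≤ R := ht.1.trans ht.2
  have hlog : ContinuousOn (fun t => α + β * log t) (Icc s R) :=
    continuousOn_const_add_mul_log α β fun t ht => (hs.trans_le ht.1).ne'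
  have := (hsub.sub_const_add_mul_log hs hg α β).le_max hs.le (hg.sub hlog) ht
  rw [hφ s ⟨le_rfl, hsR⟩] at hgs
  rw [hφ R ⟨hsR, le_rfl⟩] at hgR
  rw [hφ t ht]
  linarith [max_le (sub_nonpos.2 hgs) (sub_nonpos.2 hgR)]

end RadialSubmeanOn

theorem scattering_solution_dominates_asymptotic_general (a R₀ R : ℝ)
    (ha : 0 < a) (hR₀R : R₀ < R)
    (f₀ : ℝ → ℝ)
    (hcont : ContinuousOn f₀ (Set.Ioi 0))
    (hharm : ∀ r : ℝ, R₀ ≤ r → f₀ r = Real.log (r / a) / Real.log (R / a))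
    (hsub : ∀ z : ℂ, z ≠ 0 → ∀ ρ : ℝ, 0 < ρ → ρ < ‖z‖ →
      f₀ ‖z‖ ≤ (1 / (2 * π)) *
        ∫ θ in (0 : ℝ)..(2 * π), f₀ ‖z + ρ * Complex.exp (θ * Complex.I)‖) :
    ∀ r ∈ Set.Ioc (0 : ℝ) R, Real.log (r / a) / Real.log (R / a) ≤ f₀ r := by
  rintro s ⟨hs, -⟩
  rcases le_or_gt R₀ s with hR₀s | hsR₀
  · exact (hharm s hR₀s).ge
  have hsubmean : RadialSubmeanOn f₀ s R := fun r hr ρ hρ hρs _ => by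
    have hr0 : 0 < r := hs.trans hr.1
    simpa [circleAverage_def, circleMap, abs_of_pos hr0] using
      hsub r (Complex.ofReal_ne_zero.2 hr0.ne') ρ hρ (by simp [abs_of_pos hr0]; linarith)
  set h := fun t => log (t / a) / log (R / a)
  have hlogR₀ : 0 < log R - log R₀ := sub_pos.2 (log_lt_log (hs.trans hsR₀) hR₀R)
  have hlogs : 0 < log R - log s := sub_pos.2 (log_lt_log hs (hsR₀.trans hR₀R))
  set c := (f₀ s - h s) / (log R - log s)
  have hfs : f₀ s = h s + c * (log R - log s) := by
    rw [div_mul_cancel₀ _ hlogs.ne']; ring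
  have hcmp := hsubmean.le_of_isLogAffineOn (φ := fun t => h t + c * (log R - log t)) hs
    (hcont.mono fun t ht => hs.trans_le ht.1)
    ⟨-log a / log (R / a) + c * log R, (log (R / a))⁻¹ - c, fun t ht => by
      simp only [h]; rw [log_div (hs.trans_le ht.1).ne' ha.ne']; ring⟩
    hfs.le (by rw [sub_self, mul_zero, add_zero]; exact (hharm R hR₀R.le).le) ⟨hsR₀.le, hR₀R.le⟩
  rw [hharm R₀ le_rfl] at hcmp
  have hc : 0 ≤ c := nonneg_of_mul_nonneg_left (by linarith) hlogR₀
  rw [hfs]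
  exact le_add_of_nonneg_right (mul_nonneg hc hlogs.le)

/-- Part A of Lemma A.2 of Lieb–Yngvason: a nonnegative radial profile `f₀` which is
subharmonic as a function on the punctured plane (subharmonicity encoded by the
circle sub-mean value property), agrees with the harmonic profile
`ln(r/a)/ln(R/a)` for `r ≥ R₀`, dominates that harmonic profile on all of `(0, R]`. -/
theorem scattering_solution_dominates_asymptotic (a R₀ R : ℝ)
    (ha : 0 < a) (haR₀ : a < R₀) (hR₀R : R₀ < R)
    (f₀ : ℝ → ℝ)
    (hcont : ContinuousOn f₀ (Set.Ioi 0))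
    (hnonneg : ∀ r ∈ Set.Ioc (0 : ℝ) R, 0 ≤ f₀ r)
    (hbdry : f₀ R = 1)
    (hharm : ∀ r : ℝ, R₀ ≤ r → f₀ r = Real.log (r / a) / Real.log (R / a))
    (hsub : ∀ z : ℂ, z ≠ 0 → ∀ ρ : ℝ, 0 < ρ → ρ < ‖z‖ →
      f₀ ‖z‖ ≤ (1 / (2 * π)) *
        ∫ θ in (0 : ℝ)..(2 * π), f₀ ‖z + ρ * Complex.exp (θ * Complex.I)‖) :
    ∀ r ∈ Set.Ioc (0 : ℝ) R, Real.log (r / a) / Real.log (R / a) ≤ f₀ r :=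
  scattering_solution_dominates_asymptotic_general a R₀ R ha hR₀R f₀ hcont hharm hsub
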